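/- Let v : ℝ³ → ℝ be smooth with coordinates (x₁, x₂, x₄), and let L₄₁₂ = (1/2)(∂₁²v)(∂₁∂₄v) − 2(∂₁³v)(∂₁²∂₂v) − (2/3)(∂₁∂₂v)(∂₂²v) + 4(∂₁²v)²(∂₁∂₂v). Then the Euler–Lagrange equation E(L₄₁₂) = 0 is exactly the second KP equation ∂₁³∂₄v + 4∂₁⁵∂₂v − (4/3)∂₁∂₂³v + 8(∂₁⁴v)(∂₁∂₂v) + 24(∂₁³v)(∂₁²∂₂v) + 16(∂₁²v)(∂₁³∂₂v) = 0. -/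

import Mathlib

/-- Coordinates are `(x₁, x₂, x₄)`: `D1, D2, D4` are the three partial derivatives. -/
noncomputable def D1 (v : ℝ → ℝ → ℝ → ℝ) : ℝ → ℝ → ℝ → ℝ :=
  fun x y w => deriv (fun s => v s y w) x
noncomputable def D2 (v : ℝ → ℝ → ℝ → ℝ) : ℝ → ℝ → ℝ → ℝ :=
  fun x y w => deriv (fun s => v x s w) y
noncomputable def D4 (v : ℝ → ℝ → ℝ → ℝ) : ℝ → ℝ → ℝ → ℝ :=
  fun x y w => deriv (fun s => v x y s) w

/-- The second KP Lagrangian `L₄₁₂` as a function of the jet variables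
`(v₁₁, v₁₄, v₁₁₁, v₁₁₂, v₁₂, v₂₂)`. -/
noncomputable def L412 : ℝ → ℝ → ℝ → ℝ → ℝ → ℝ → ℝ :=
  fun a b c d e f => (1 / 2) * a * b - 2 * c * d - (2 / 3) * e * f + 4 * a ^ 2 * e

/-- Slot derivatives of a six-argument function of the jet variables. -/
noncomputable def S1 (F : ℝ → ℝ → ℝ → ℝ → ℝ → ℝ → ℝ) : ℝ → ℝ → ℝ → ℝ → ℝ → ℝ → ℝ :=
  fun a b c d e f => deriv (fun t => F t b c d e f) a
noncomputable def S2 (F : ℝ → ℝ → ℝ → ℝ → ℝ → ℝ → ℝ) : ℝ → ℝ → ℝ → ℝ → ℝ → ℝ → ℝ :=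
  fun a b c d e f => deriv (fun t => F a t c d e f) b
noncomputable def S3 (F : ℝ → ℝ → ℝ → ℝ → ℝ → ℝ → ℝ) : ℝ → ℝ → ℝ → ℝ → ℝ → ℝ → ℝ :=
  fun a b c d e f => deriv (fun t => F a b t d e f) c
noncomputable def S4 (F : ℝ → ℝ → ℝ → ℝ → ℝ → ℝ → ℝ) : ℝ → ℝ → ℝ → ℝ → ℝ → ℝ → ℝ :=
  fun a b c d e f => deriv (fun t => F a b c t e f) d
noncomputable def S5 (F : ℝ → ℝ → ℝ → ℝ → ℝ → ℝ → ℝ) : ℝ → ℝ → ℝ → ℝ → ℝ → ℝ → ℝ :=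
  fun a b c d e f => deriv (fun t => F a b c d t f) e
noncomputable def S6 (F : ℝ → ℝ → ℝ → ℝ → ℝ → ℝ → ℝ) : ℝ → ℝ → ℝ → ℝ → ℝ → ℝ → ℝ :=
  fun a b c d e f => deriv (fun t => F a b c d e t) f

/-- Composition along the jet of `v`: `(v₁₁, v₁₄, v₁₁₁, v₁₁₂, v₁₂, v₂₂)`. -/
noncomputable def C (v : ℝ → ℝ → ℝ → ℝ) (F : ℝ → ℝ → ℝ → ℝ → ℝ → ℝ → ℝ) :
    ℝ → ℝ → ℝ → ℝ :=
  fun x y w => F (D1 (D1 v) x y w) (D1 (D4 v) x y w) (D1 (D1 (D1 v)) x y w)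
    (D1 (D1 (D2 v)) x y w) (D1 (D2 v) x y w) (D2 (D2 v) x y w)

/-! ### Auxiliary infrastructure -/

abbrev E3 : Type := ℝ × ℝ × ℝ

noncomputable def pd (u : E3) (F : E3 → ℝ) : E3 → ℝ := fun p => fderiv ℝ F p u

def uc (g : ℝ → ℝ → ℝ → ℝ) : E3 → ℝ := fun p => g p.1 p.2.1 p.2.2

lemma pd_contDiff {F : E3 → ℝ} (hF : ContDiff ℝ (⊤ : ℕ∞) F) (u : E3) :
    ContDiff ℝ (⊤ : ℕ∞) (pd u F) :=
  (hF.fderiv_right (le_refl _)).clm_apply contDiff_const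

lemma pd_comm {F : E3 → ℝ} (hF : ContDiff ℝ (⊤ : ℕ∞) F) (u w : E3) :
    pd u (pd w F) = pd w (pd u F) := by
  funext p
  have hd1 : Differentiable ℝ F := hF.differentiable (by simp)
  have hd : Differentiable ℝ (fderiv ℝ F) :=
    (hF.fderiv_right (m := (⊤ : ℕ∞)) (le_refl _)).differentiable (by simp)
  have key : ∀ a b : E3, fderiv ℝ (fun q => fderiv ℝ F q a) p b
      = fderiv ℝ (fderiv ℝ F) p b a := by
    intro a b
    rw [fderiv_clm_apply (hd p) (differentiableAt_const a)]
    simp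
  have hsymm : fderiv ℝ (fderiv ℝ F) p u w = fderiv ℝ (fderiv ℝ F) p w u :=
    second_derivative_symmetric (fun y => (hd1 y).hasFDerivAt) (hd p).hasFDerivAt u w
  show fderiv ℝ (fun q => fderiv ℝ F q w) p u = fderiv ℝ (fun q => fderiv ℝ F q u) p w
  rw [key w u, key u w, hsymm]

lemma pd_add {F G : E3 → ℝ} (hF : Differentiable ℝ F) (hG : Differentiable ℝ G) (u : E3) :
    pd u (fun p => F p + G p) = fun p => pd u F p + pd u G p := by
  funext p; simp [pd, fderiv_fun_add (hF p) (hG p)]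

lemma pd_const_mul {F : E3 → ℝ} (hF : Differentiable ℝ F) (c : ℝ) (u : E3) :
    pd u (fun p => c * F p) = fun p => c * pd u F p := by
  funext p; simp [pd, fderiv_const_mul (hF p) c]

lemma pd_mul {F G : E3 → ℝ} (hF : Differentiable ℝ F) (hG : Differentiable ℝ G) (u : E3) :
    pd u (fun p => F p * G p) = fun p => pd u F p * G p + F p * pd u G p := by
  funext p
  simp [pd, fderiv_fun_mul (hF p) (hG p)]
  ring

lemma pd_shape1 {X Y Z : E3 → ℝ} (c c' : ℝ) (hX : Differentiable ℝ X)
    (hY : Differentiable ℝ Y) (hZ : Differentiable ℝ Z) (u : E3) :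
    pd u (fun p => c * X p + c' * (Y p * Z p)) =
      fun p => c * pd u X p + c' * (pd u Y p * Z p + Y p * pd u Z p) := by
  have h := pd_add (hX.const_mul c) ((hY.fun_mul hZ).const_mul c') u
  rw [pd_const_mul hX c u, pd_const_mul (hY.fun_mul hZ) c' u, pd_mul hY hZ u] at h
  exact h

lemma pd_shape2 {X A B Cf D : E3 → ℝ} (c c' : ℝ) (hX : Differentiable ℝ X)
    (hA : Differentiable ℝ A) (hB : Differentiable ℝ B)
    (hC : Differentiable ℝ Cf) (hD : Differentiable ℝ D) (u : E3) :
    pd u (fun p => c * X p + c' * (A p * B p + Cf p * D p)) =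
      fun p => c * pd u X p +
        c' * ((pd u A p * B p + A p * pd u B p) + (pd u Cf p * D p + Cf p * pd u D p)) := by
  have h := pd_add (hX.const_mul c) (((hA.fun_mul hB).fun_add (hC.fun_mul hD)).const_mul c') u
  rw [pd_const_mul hX c u, pd_const_mul ((hA.fun_mul hB).fun_add (hC.fun_mul hD)) c' u,
    pd_add (hA.fun_mul hB) (hC.fun_mul hD) u, pd_mul hA hB u, pd_mul hC hD u] at h
  exact h

noncomputable def e1 : E3 := (1, 0, 0)
noncomputable def e2 : E3 := (0, 1, 0)
noncomputable def e4 : E3 := (0, 0, 1)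

lemma uc_D1 {g : ℝ → ℝ → ℝ → ℝ} (hg : ContDiff ℝ (⊤ : ℕ∞) (uc g)) :
    uc (D1 g) = pd e1 (uc g) := by
  funext p
  obtain ⟨x, y, w⟩ := p
  have hl : HasDerivAt (fun s : ℝ => ((s, y, w) : E3)) e1 x :=
    (hasDerivAt_id x).prodMk ((hasDerivAt_const x y).prodMk (hasDerivAt_const x w))
  have h := ((hg.differentiable (by simp) (x, y, w)).hasFDerivAt).comp_hasDerivAt x hl
  have := h.deriv
  simpa [uc, D1, pd, Function.comp_def] using this

lemma uc_D2 {g : ℝ → ℝ → ℝ → ℝ} (hg : ContDiff ℝ (⊤ : ℕ∞) (uc g)) :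
    uc (D2 g) = pd e2 (uc g) := by
  funext p
  obtain ⟨x, y, w⟩ := p
  have hl : HasDerivAt (fun s : ℝ => ((x, s, w) : E3)) e2 y :=
    (hasDerivAt_const y x).prodMk ((hasDerivAt_id y).prodMk (hasDerivAt_const y w))
  have h := ((hg.differentiable (by simp) (x, y, w)).hasFDerivAt).comp_hasDerivAt y hl
  have := h.deriv
  simpa [uc, D2, pd, Function.comp_def] using this

lemma uc_D4 {g : ℝ → ℝ → ℝ → ℝ} (hg : ContDiff ℝ (⊤ : ℕ∞) (uc g)) :
    uc (D4 g) = pd e4 (uc g) := by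
  funext p
  obtain ⟨x, y, w⟩ := p
  have hl : HasDerivAt (fun s : ℝ => ((x, y, s) : E3)) e4 w :=
    (hasDerivAt_const w x).prodMk ((hasDerivAt_const w y).prodMk (hasDerivAt_id w))
  have h := ((hg.differentiable (by simp) (x, y, w)).hasFDerivAt).comp_hasDerivAt w hl
  have := h.deriv
  simpa [uc, D4, pd, Function.comp_def] using this

lemma uc_D1' {g : ℝ → ℝ → ℝ → ℝ} {G : E3 → ℝ} (hg : uc g = G)
    (hG : ContDiff ℝ (⊤ : ℕ∞) G) : uc (D1 g) = pd e1 G := by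
  rw [uc_D1 (by rw [hg]; exact hG), hg]

lemma uc_D2' {g : ℝ → ℝ → ℝ → ℝ} {G : E3 → ℝ} (hg : uc g = G)
    (hG : ContDiff ℝ (⊤ : ℕ∞) G) : uc (D2 g) = pd e2 G := by
  rw [uc_D2 (by rw [hg]; exact hG), hg]

lemma uc_D4' {g : ℝ → ℝ → ℝ → ℝ} {G : E3 → ℝ} (hg : uc g = G)
    (hG : ContDiff ℝ (⊤ : ℕ∞) G) : uc (D4 g) = pd e4 G := by
  rw [uc_D4 (by rw [hg]; exact hG), hg]

/-! ### Slot derivatives of L412 -/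

lemma S1_L412 : S1 L412 = fun a b _ _ e _ => 1 / 2 * b + 8 * (a * e) := by
  funext a b c d e f
  simp only [S1, L412]
  have hp : HasDerivAt (fun t : ℝ => t ^ 2) (2 * a) a := by simpa using hasDerivAt_pow 2 a
  have h : HasDerivAt
      (fun t : ℝ => 1 / 2 * t * b - 2 * c * d - 2 / 3 * e * f + 4 * t ^ 2 * e)
      (1 / 2 * b + 8 * (a * e)) a := by
    have h0 := (((((hasDerivAt_id a).const_mul (1/2 : ℝ)).mul_const b).sub_const
      (2 * c * d)).sub_const (2 / 3 * e * f)).add ((hp.const_mul (4:ℝ)).mul_const e)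
    exact h0.congr_deriv (by ring)
  exact h.deriv

lemma S2_L412 : S2 L412 = fun a _ _ _ _ _ => 1 / 2 * a := by
  funext a b c d e f
  simp only [S2, L412]
  have h : HasDerivAt
      (fun t : ℝ => 1 / 2 * a * t - 2 * c * d - 2 / 3 * e * f + 4 * a ^ 2 * e)
      (1 / 2 * a) b := by
    have h0 := ((((hasDerivAt_id b).const_mul (1 / 2 * a)).sub_const
      (2 * c * d)).sub_const (2 / 3 * e * f)).add_const (4 * a ^ 2 * e)
    exact h0.congr_deriv (by ring)
  exact h.deriv

lemma S3_L412 : S3 L412 = fun _ _ _ d _ _ => -2 * d := by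
  funext a b c d e f
  simp only [S3, L412]
  have h : HasDerivAt
      (fun t : ℝ => 1 / 2 * a * b - 2 * t * d - 2 / 3 * e * f + 4 * a ^ 2 * e)
      (-2 * d) c := by
    have h0 := ((((hasDerivAt_id c).const_mul (2 : ℝ)).mul_const d).const_sub
      (1 / 2 * a * b)).sub_const (2 / 3 * e * f) |>.add_const (4 * a ^ 2 * e)
    exact h0.congr_deriv (by ring)
  exact h.deriv

lemma S4_L412 : S4 L412 = fun _ _ c _ _ _ => -2 * c := by
  funext a b c d e f
  simp only [S4, L412]
  have h : HasDerivAt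
      (fun t : ℝ => 1 / 2 * a * b - 2 * c * t - 2 / 3 * e * f + 4 * a ^ 2 * e)
      (-2 * c) d := by
    have h0 := (((hasDerivAt_id d).const_mul (2 * c)).const_sub
      (1 / 2 * a * b)).sub_const (2 / 3 * e * f) |>.add_const (4 * a ^ 2 * e)
    exact h0.congr_deriv (by ring)
  exact h.deriv

lemma S5_L412 : S5 L412 = fun a _ _ _ _ f => -2 / 3 * f + 4 * (a * a) := by
  funext a b c d e f
  simp only [S5, L412]
  have h : HasDerivAt
      (fun t : ℝ => 1 / 2 * a * b - 2 * c * d - 2 / 3 * t * f + 4 * a ^ 2 * t)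
      (-2 / 3 * f + 4 * (a * a)) e := by
    have h0 := ((((hasDerivAt_id e).const_mul (2 / 3 : ℝ)).mul_const f).const_sub
      (1 / 2 * a * b - 2 * c * d)).add ((hasDerivAt_id e).const_mul (4 * a ^ 2))
    exact h0.congr_deriv (by ring)
  exact h.deriv

lemma S6_L412 : S6 L412 = fun _ _ _ _ e _ => -2 / 3 * e := by
  funext a b c d e f
  simp only [S6, L412]
  have h : HasDerivAt
      (fun t : ℝ => 1 / 2 * a * b - 2 * c * d - 2 / 3 * e * t + 4 * a ^ 2 * e)
      (-2 / 3 * e) f := by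
    have h0 := (((hasDerivAt_id f).const_mul (2 / 3 * e)).const_sub
      (1 / 2 * a * b - 2 * c * d)).add_const (4 * a ^ 2 * e)
    exact h0.congr_deriv (by ring)
  exact h.deriv

/-- The Euler–Lagrange equation `E(L₄₁₂) = 0` is exactly the second KP equation. -/
theorem stmt_10 (v : ℝ → ℝ → ℝ → ℝ)
    (hv : ContDiff ℝ (⊤ : ℕ∞) (fun p : ℝ × ℝ × ℝ => v p.1 p.2.1 p.2.2)) :
    ((∀ x y w : ℝ,
        D1 (D1 (C v (S1 L412))) x y w + D1 (D4 (C v (S2 L412))) x y w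
          - D1 (D1 (D1 (C v (S3 L412)))) x y w - D1 (D1 (D2 (C v (S4 L412)))) x y w
          + D1 (D2 (C v (S5 L412))) x y w + D2 (D2 (C v (S6 L412))) x y w = 0)
      ↔ (∀ x y w : ℝ,
        D1 (D1 (D1 (D4 v))) x y w
          + 4 * D1 (D1 (D1 (D1 (D1 (D2 v))))) x y w
          - (4 / 3) * D1 (D2 (D2 (D2 v))) x y w
          + 8 * D1 (D1 (D1 (D1 v))) x y w * D1 (D2 v) x y w
          + 24 * D1 (D1 (D1 v)) x y w * D1 (D1 (D2 v)) x y w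
          + 16 * D1 (D1 v) x y w * D1 (D1 (D1 (D2 v))) x y w = 0)) := by
  -- smoothness of iterated partials
  have s0 : ContDiff ℝ (⊤ : ℕ∞) (uc v) := hv
  have s1 := pd_contDiff s0 e1
  have s2 := pd_contDiff s0 e2
  have s4 := pd_contDiff s0 e4
  have s11 := pd_contDiff s1 e1
  have s12 := pd_contDiff s2 e1
  have s14 := pd_contDiff s4 e1
  have s22 := pd_contDiff s2 e2
  have s111 := pd_contDiff s11 e1
  have s112 := pd_contDiff s12 e1
  have s114 := pd_contDiff s14 e1
  have s222 := pd_contDiff s22 e2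
  have s1111 := pd_contDiff s111 e1
  have s1112 := pd_contDiff s112 e1
  have s11112 := pd_contDiff s1112 e1
  have d11 := s11.differentiable (by simp)
  have d12 := s12.differentiable (by simp)
  have d14 := s14.differentiable (by simp)
  have d22 := s22.differentiable (by simp)
  have d111 := s111.differentiable (by simp)
  have d112 := s112.differentiable (by simp)
  have d114 := s114.differentiable (by simp)
  have d222 := s222.differentiable (by simp)
  have d1112 := s1112.differentiable (by simp)
  have d11112 := s11112.differentiable (by simp)
  have d211 := (pd_contDiff s11 e2).differentiable (by simp)
  have d2111 := (pd_contDiff s111 e2).differentiable (by simp)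
  have d12111 := (pd_contDiff (pd_contDiff s111 e2) e1).differentiable (by simp)
  have d411 := (pd_contDiff s11 e4).differentiable (by simp)
  have d212 := (pd_contDiff s12 e2).differentiable (by simp)
  -- uc conversions of iterated partials of v
  have u1 : uc (D1 v) = pd e1 (uc v) := uc_D1 s0
  have u2 : uc (D2 v) = pd e2 (uc v) := uc_D2 s0
  have u4 : uc (D4 v) = pd e4 (uc v) := uc_D4 s0
  have u11 := uc_D1' u1 s1
  have u12 := uc_D1' u2 s2
  have u14 := uc_D1' u4 s4
  have u22 := uc_D2' u2 s2
  have u111 := uc_D1' u11 s11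
  have u112 := uc_D1' u12 s12
  have u114 := uc_D1' u14 s14
  have u222 := uc_D2' u22 s22
  have u1111 := uc_D1' u111 s111
  have u1112 := uc_D1' u112 s112
  have u1114 := uc_D1' u114 s114
  have u1222 := uc_D1' u222 s222
  have u11112 := uc_D1' u1112 s1112
  have u111112 := uc_D1' u11112 s11112
  -- the six composed Lagrangian slot derivatives
  have hC1 : uc (C v (S1 L412)) = fun p =>
      1 / 2 * pd e1 (pd e4 (uc v)) p
        + 8 * (pd e1 (pd e1 (uc v)) p * pd e1 (pd e2 (uc v)) p) := by
    rw [S1_L412]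
    funext p
    show 1 / 2 * uc (D1 (D4 v)) p + 8 * (uc (D1 (D1 v)) p * uc (D1 (D2 v)) p)
      = 1 / 2 * pd e1 (pd e4 (uc v)) p
        + 8 * (pd e1 (pd e1 (uc v)) p * pd e1 (pd e2 (uc v)) p)
    rw [u14, u11, u12]
  have hC2 : uc (C v (S2 L412)) = fun p => 1 / 2 * pd e1 (pd e1 (uc v)) p := by
    rw [S2_L412]
    funext p
    show 1 / 2 * uc (D1 (D1 v)) p = 1 / 2 * pd e1 (pd e1 (uc v)) p
    rw [u11]
  have hC3 : uc (C v (S3 L412)) = fun p => -2 * pd e1 (pd e1 (pd e2 (uc v))) p := by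
    rw [S3_L412]
    funext p
    show -2 * uc (D1 (D1 (D2 v))) p = -2 * pd e1 (pd e1 (pd e2 (uc v))) p
    rw [u112]
  have hC4 : uc (C v (S4 L412)) = fun p => -2 * pd e1 (pd e1 (pd e1 (uc v))) p := by
    rw [S4_L412]
    funext p
    show -2 * uc (D1 (D1 (D1 v))) p = -2 * pd e1 (pd e1 (pd e1 (uc v))) p
    rw [u111]
  have hC5 : uc (C v (S5 L412)) = fun p =>
      -2 / 3 * pd e2 (pd e2 (uc v)) p
        + 4 * (pd e1 (pd e1 (uc v)) p * pd e1 (pd e1 (uc v)) p) := by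
    rw [S5_L412]
    funext p
    show -2 / 3 * uc (D2 (D2 v)) p + 4 * (uc (D1 (D1 v)) p * uc (D1 (D1 v)) p)
      = -2 / 3 * pd e2 (pd e2 (uc v)) p
        + 4 * (pd e1 (pd e1 (uc v)) p * pd e1 (pd e1 (uc v)) p)
    rw [u22, u11]
  have hC6 : uc (C v (S6 L412)) = fun p => -2 / 3 * pd e1 (pd e2 (uc v)) p := by
    rw [S6_L412]
    funext p
    show -2 / 3 * uc (D1 (D2 v)) p = -2 / 3 * pd e1 (pd e2 (uc v)) p
    rw [u12]
  -- smoothness of the composed slot derivatives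
  have sC1 : ContDiff ℝ (⊤ : ℕ∞) (uc (C v (S1 L412))) := by
    rw [hC1]; exact (contDiff_const.mul s14).add (contDiff_const.mul (s11.mul s12))
  have sC2 : ContDiff ℝ (⊤ : ℕ∞) (uc (C v (S2 L412))) := by
    rw [hC2]; exact contDiff_const.mul s11
  have sC3 : ContDiff ℝ (⊤ : ℕ∞) (uc (C v (S3 L412))) := by
    rw [hC3]; exact contDiff_const.mul s112
  have sC4 : ContDiff ℝ (⊤ : ℕ∞) (uc (C v (S4 L412))) := by
    rw [hC4]; exact contDiff_const.mul s111
  have sC5 : ContDiff ℝ (⊤ : ℕ∞) (uc (C v (S5 L412))) := by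
    rw [hC5]; exact (contDiff_const.mul s22).add (contDiff_const.mul (s11.mul s11))
  have sC6 : ContDiff ℝ (⊤ : ℕ∞) (uc (C v (S6 L412))) := by
    rw [hC6]; exact contDiff_const.mul s12
  -- uc conversions of the Euler terms
  have E1 : uc (D1 (D1 (C v (S1 L412)))) = pd e1 (pd e1 (uc (C v (S1 L412)))) :=
    uc_D1' (uc_D1 sC1) (pd_contDiff sC1 e1)
  have E2 : uc (D1 (D4 (C v (S2 L412)))) = pd e1 (pd e4 (uc (C v (S2 L412)))) :=
    uc_D1' (uc_D4 sC2) (pd_contDiff sC2 e4)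
  have E3 : uc (D1 (D1 (D1 (C v (S3 L412)))))
      = pd e1 (pd e1 (pd e1 (uc (C v (S3 L412))))) :=
    uc_D1' (uc_D1' (uc_D1 sC3) (pd_contDiff sC3 e1))
      (pd_contDiff (pd_contDiff sC3 e1) e1)
  have E4 : uc (D1 (D1 (D2 (C v (S4 L412)))))
      = pd e1 (pd e1 (pd e2 (uc (C v (S4 L412))))) :=
    uc_D1' (uc_D1' (uc_D2 sC4) (pd_contDiff sC4 e2))
      (pd_contDiff (pd_contDiff sC4 e2) e1)
  have E5 : uc (D1 (D2 (C v (S5 L412)))) = pd e1 (pd e2 (uc (C v (S5 L412)))) :=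
    uc_D1' (uc_D2 sC5) (pd_contDiff sC5 e2)
  have E6 : uc (D2 (D2 (C v (S6 L412)))) = pd e2 (pd e2 (uc (C v (S6 L412)))) :=
    uc_D2' (uc_D2 sC6) (pd_contDiff sC6 e2)
  -- commutators
  have c41 : pd e4 (pd e1 (uc v)) = pd e1 (pd e4 (uc v)) := pd_comm s0 e4 e1
  have c411 : pd e4 (pd e1 (pd e1 (uc v))) = pd e1 (pd e4 (pd e1 (uc v))) :=
    pd_comm s1 e4 e1
  have c21 : pd e2 (pd e1 (uc v)) = pd e1 (pd e2 (uc v)) := pd_comm s0 e2 e1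
  have c211 : pd e2 (pd e1 (pd e1 (uc v))) = pd e1 (pd e2 (pd e1 (uc v))) :=
    pd_comm s1 e2 e1
  have c2111 : pd e2 (pd e1 (pd e1 (pd e1 (uc v))))
      = pd e1 (pd e2 (pd e1 (pd e1 (uc v)))) := pd_comm s11 e2 e1
  have c212 : pd e2 (pd e1 (pd e2 (uc v))) = pd e1 (pd e2 (pd e2 (uc v))) :=
    pd_comm s2 e2 e1
  have c2122 : pd e2 (pd e1 (pd e2 (pd e2 (uc v))))
      = pd e1 (pd e2 (pd e2 (pd e2 (uc v)))) := pd_comm s22 e2 e1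
  -- the key pointwise identity
  have key : ∀ x y w : ℝ,
      D1 (D1 (C v (S1 L412))) x y w + D1 (D4 (C v (S2 L412))) x y w
          - D1 (D1 (D1 (C v (S3 L412)))) x y w - D1 (D1 (D2 (C v (S4 L412)))) x y w
          + D1 (D2 (C v (S5 L412))) x y w + D2 (D2 (C v (S6 L412))) x y w
        = D1 (D1 (D1 (D4 v))) x y w
          + 4 * D1 (D1 (D1 (D1 (D1 (D2 v))))) x y w
          - (4 / 3) * D1 (D2 (D2 (D2 v))) x y w
          + 8 * D1 (D1 (D1 (D1 v))) x y w * D1 (D2 v) x y w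
          + 24 * D1 (D1 (D1 v)) x y w * D1 (D1 (D2 v)) x y w
          + 16 * D1 (D1 v) x y w * D1 (D1 (D1 (D2 v))) x y w := by
    intro x y w
    show uc (D1 (D1 (C v (S1 L412)))) (x, y, w) + uc (D1 (D4 (C v (S2 L412)))) (x, y, w)
          - uc (D1 (D1 (D1 (C v (S3 L412))))) (x, y, w)
          - uc (D1 (D1 (D2 (C v (S4 L412))))) (x, y, w)
          + uc (D1 (D2 (C v (S5 L412)))) (x, y, w) + uc (D2 (D2 (C v (S6 L412)))) (x, y, w)
        = uc (D1 (D1 (D1 (D4 v)))) (x, y, w)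
          + 4 * uc (D1 (D1 (D1 (D1 (D1 (D2 v)))))) (x, y, w)
          - (4 / 3) * uc (D1 (D2 (D2 (D2 v)))) (x, y, w)
          + 8 * uc (D1 (D1 (D1 (D1 v)))) (x, y, w) * uc (D1 (D2 v)) (x, y, w)
          + 24 * uc (D1 (D1 (D1 v))) (x, y, w) * uc (D1 (D1 (D2 v))) (x, y, w)
          + 16 * uc (D1 (D1 v)) (x, y, w) * uc (D1 (D1 (D1 (D2 v)))) (x, y, w)
    rw [E1, E2, E3, E4, E5, E6, u1114, u111112, u1222, u1111, u12, u111, u112, u11, u1112,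
      hC1, hC2, hC3, hC4, hC5, hC6]
    -- distribute the outer total derivatives
    rw [pd_shape1 (1 / 2) 8 d14 d11 d12 e1,
      pd_shape2 (1 / 2) 8 d114 d111 d12 d11 d112 e1,
      pd_const_mul d11 (1 / 2) e4,
      pd_const_mul d411 (1 / 2) e1,
      pd_const_mul d112 (-2) e1,
      pd_const_mul d1112 (-2) e1,
      pd_const_mul d11112 (-2) e1,
      pd_const_mul d111 (-2) e2,
      pd_const_mul d2111 (-2) e1,
      pd_const_mul d12111 (-2) e1,
      pd_shape1 (-2 / 3) 4 d22 d11 d11 e2,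
      pd_shape2 (-2 / 3) 4 d222 d211 d11 d11 d211 e1,
      pd_const_mul d12 (-2 / 3) e2,
      pd_const_mul d212 (-2 / 3) e2]
    -- commute partial derivatives into canonical order
    rw [c411, c41, c2111, c211, c21, c212, c2122]
    simp only []
    ring
  constructor
  · intro h x y w
    rw [← key x y w]
    exact h x y w
  · intro h x y w
    rw [key x y w]
    exact h x y w
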